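/- Let P = Σ_{i=0}^n a_i X^i be a polynomial of degree n over a complete discrete valuation field K whose Newton polygon has an extremal point at abscissa d with 0 < d < n. Define A₀ = Σ_{i=0}^d a_i X^i, V₀ = 1, and recursively A_{i+1} = A_i + (V_i·P mod A_i), B_{i+1} = P div A_{i+1}, V_{i+1} = (2V_i − V_i² B_{i+1}) mod A_{i+1}. Then the sequence (A_i) converges (coefficientwise in the valuation topology) to a divisor A_∞ of P of degree d whose leading coefficient is a_d and whose Newton function equals NF(P) restricted to [0,d]. -/

import Mathlib

open Polynomial Set

noncomputable section

variable {K : Type*} [Field K]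

/-- Map `WithTop ℤ` into `EReal`. -/
def toE : WithTop ℤ → EReal := WithTop.recTopCoe ⊤ (fun n => ((n : ℝ) : EReal))

/-- Newton function of a polynomial: the largest convex function lying below the
points `(i, val aᵢ)`, realized as the sup of affine minorants. -/
def NF (v : AddValuation K (WithTop ℤ)) (P : K[X]) (x : ℝ) : EReal :=
  sSup {y : EReal | ∃ a b : ℝ,
    (∀ i : ℕ, i ≤ P.natDegree → ((a * (i : ℝ) + b : ℝ) : EReal) ≤ toE (v (P.coeff i))) ∧
    y = ((a * x + b : ℝ) : EReal)}

/-- The invariant `b_φ(Q) = min_{0 ≤ x ≤ deg Q} (NF(Q)(x) − φ(x))`. -/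
def bE (v : AddValuation K (WithTop ℤ)) (φ : ℝ → EReal) (Q : K[X]) : EReal :=
  sInf {y : EReal | ∃ x : ℝ, 0 ≤ x ∧ x ≤ (Q.natDegree : ℝ) ∧ y = NF v Q x - φ x}

/-!
Weight coefficients by the line of slope `λ₀` through the vertex `(d, val a_d)`:
`AboveLine v Q λ₀ W` says `val q_i ≥ λ₀ i + W`. Every `A_i` has its leading coefficient `a_d` on
that line, so Euclidean division by `A_i` costs exactly the intercept `W`. With this bookkeeping
the Newton–Hensel identities show that the two defects `P mod A_i` and
`(1 - V_i (P div A_i)) mod A_i` lie above the line shifted up by a margin `η_i` which doubles at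
every step, starting from the vertex gap `η_0 = λ₁ - λ₀`. Hence `(A_i)` converges, and
`P mod A_∞` lies above lines of arbitrarily large intercept, so it vanishes.

Writing `P = A_∞ B`, the cofactor `B` lies above the line of slope `λ₁` through the origin and
`val b_0 = 0`; consequently a line of slope `≤ λ₀` lies below `A_∞` iff it lies below `P`, and on
`[0, d]` only such lines matter for the Newton functions.
-/

lemma toE_coe (n : ℤ) : toE n = ((n : ℝ) : EReal) := rfl

lemma toE_top : toE ⊤ = ⊤ := rfl

lemma toE_strictMono : StrictMono toE := by
  intro a b h
  induction b using WithTop.recTopCoe with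
  | top =>
    lift a to ℤ using h.ne
    exact EReal.coe_lt_top _
  | coe n =>
    lift a to ℤ using (h.trans (WithTop.coe_lt_top n)).ne
    rw [toE_coe, toE_coe]
    exact_mod_cast WithTop.coe_lt_coe.mp h

lemma toE_add (a b : WithTop ℤ) : toE (a + b) = toE a + toE b := by
  induction a using WithTop.recTopCoe with
  | top =>
    rw [top_add, toE_top, EReal.top_add_of_ne_bot]
    induction b using WithTop.recTopCoe <;> simp [toE_coe, toE_top]
  | coe m =>
    induction b using WithTop.recTopCoe with
    | top => rw [add_top, toE_top, toE_coe, EReal.coe_add_top]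
    | coe n => rw [← WithTop.coe_add, toE_coe, toE_coe, toE_coe]; push_cast; rfl

variable (v : AddValuation K (WithTop ℤ))

def valE (x : K) : EReal := toE (v x)

variable {v}

lemma coe_le_valE {M : ℤ} {x : K} : ((M : ℝ) : EReal) ≤ valE v x ↔ (M : WithTop ℤ) ≤ v x :=
  toE_strictMono.le_iff_le (a := (M : WithTop ℤ))

@[simp] lemma valE_zero : valE v 0 = ⊤ := by rw [valE, v.map_zero, toE_top]

@[simp] lemma valE_one : valE v 1 = 0 := by
  rw [valE, v.map_one, ← WithTop.coe_zero, toE_coe]; simp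

lemma valE_mul (x y : K) : valE v (x * y) = valE v x + valE v y := by
  rw [valE, v.map_mul, toE_add]; rfl

lemma coe_le_valE_mul {x y : K} {r s t : ℝ} (hx : (r : EReal) ≤ valE v x)
    (hy : (s : EReal) ≤ valE v y) (h : t ≤ r + s) : (t : EReal) ≤ valE v (x * y) := by
  rw [valE_mul]
  exact le_trans (by exact_mod_cast h) (add_le_add hx hy)

@[simp] lemma valE_neg (x : K) : valE v (-x) = valE v x := by rw [valE, v.map_neg]; rfl

lemma le_valE_add {r : EReal} {x y : K} (hx : r ≤ valE v x) (hy : r ≤ valE v y) :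
    r ≤ valE v (x + y) :=
  (le_min hx hy).trans <| (toE_strictMono.monotone.map_min).symm.le.trans
    (toE_strictMono.monotone (v.map_add x y))

lemma lt_valE_add {r : EReal} {x y : K} (hx : r < valE v x) (hy : r < valE v y) :
    r < valE v (x + y) :=
  (lt_min hx hy).trans_le <| (toE_strictMono.monotone.map_min).symm.le.trans
    (toE_strictMono.monotone (v.map_add x y))

lemma le_valE_sub {r : EReal} {x y : K} (hx : r ≤ valE v x) (hy : r ≤ valE v y) :
    r ≤ valE v (x - y) := by
  rw [sub_eq_add_neg]; exact le_valE_add hx (by rwa [valE_neg])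

lemma le_valE_sum {ι : Type*} {r : EReal} {s : Finset ι} {f : ι → K}
    (h : ∀ i ∈ s, r ≤ valE v (f i)) : r ≤ valE v (∑ i ∈ s, f i) := by
  classical
  induction s using Finset.induction with
  | empty => simp
  | insert a s ha ih =>
    rw [Finset.sum_insert ha]
    exact le_valE_add (h a (Finset.mem_insert_self a s))
      (ih fun i hi => h i (Finset.mem_insert_of_mem hi))

lemma lt_valE_sum {ι : Type*} {r : EReal} {s : Finset ι} {f : ι → K} (hr : r ≠ ⊤)
    (h : ∀ i ∈ s, r < valE v (f i)) : r < valE v (∑ i ∈ s, f i) := by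
  classical
  induction s using Finset.induction with
  | empty => simpa using hr.lt_top
  | insert a s ha ih =>
    rw [Finset.sum_insert ha]
    exact lt_valE_add (h a (Finset.mem_insert_self a s))
      (ih fun i hi => h i (Finset.mem_insert_of_mem hi))

lemma ne_zero_of_valE_eq {x : K} {r : ℝ} (h : valE v x = r) : x ≠ 0 := by
  rintro rfl
  rw [valE_zero] at h
  exact EReal.top_ne_coe r h

variable (v) in
def AboveLine (Q : K[X]) (a b : ℝ) : Prop :=
  ∀ i : ℕ, ((a * i + b : ℝ) : EReal) ≤ valE v (Q.coeff i)

namespace AboveLine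

variable {Q R : K[X]} {a b b' : ℝ}

lemma zero : AboveLine v 0 a b := fun i => by simp

lemma one : AboveLine v 1 a 0 := fun i => by
  rcases eq_or_ne i 0 with rfl | hi
  · simp
  · simp [coeff_one, hi]

lemma mono (hQ : AboveLine v Q a b) (hb : b' ≤ b) : AboveLine v Q a b' :=
  fun i => le_trans (EReal.coe_le_coe_iff.mpr (by linarith)) (hQ i)

lemma slope_mono {a' : ℝ} (hQ : AboveLine v Q a b) (ha : a' ≤ a) : AboveLine v Q a' b :=
  fun i => le_trans (EReal.coe_le_coe_iff.mpr (by nlinarith [(i.cast_nonneg : (0 : ℝ) ≤ i)]))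
    (hQ i)

lemma add (hQ : AboveLine v Q a b) (hR : AboveLine v R a b) : AboveLine v (Q + R) a b :=
  fun i => by rw [coeff_add]; exact le_valE_add (hQ i) (hR i)

lemma neg (hQ : AboveLine v Q a b) : AboveLine v (-Q) a b :=
  fun i => by rw [coeff_neg, valE_neg]; exact hQ i

lemma sub (hQ : AboveLine v Q a b) (hR : AboveLine v R a b) : AboveLine v (Q - R) a b := by
  rw [sub_eq_add_neg]; exact hQ.add hR.neg

lemma mul (hQ : AboveLine v Q a b) (hR : AboveLine v R a b') : AboveLine v (Q * R) a (b + b') :=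
  fun i => by
    rw [coeff_mul]
    refine le_valE_sum fun p hp => coe_le_valE_mul (hQ p.1) (hR p.2) (le_of_eq ?_)
    rw [← Finset.HasAntidiagonal.mem_antidiagonal.mp hp]
    push_cast; ring

lemma C_mul_X_pow {k : K} {m : ℕ} (hk : ((a * m + b : ℝ) : EReal) ≤ valE v k) :
    AboveLine v (C k * X ^ m) a b := fun i => by
  rw [coeff_C_mul_X_pow]
  split_ifs with h
  · exact h ▸ hk
  · simp

lemma le_coeff (hQ : AboveLine v Q a b) {j : ℕ} {M : ℤ} (hM : (M : ℝ) ≤ a * j + b) :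
    (M : WithTop ℤ) ≤ v (Q.coeff j) :=
  coe_le_valE.mp ((EReal.coe_le_coe_iff.mpr hM).trans (hQ j))

end AboveLine

lemma aboveLine_iff_le_natDegree {Q : K[X]} {a b : ℝ} : AboveLine v Q a b ↔
    ∀ i ≤ Q.natDegree, ((a * i + b : ℝ) : EReal) ≤ valE v (Q.coeff i) := by
  refine ⟨fun h i _ => h i, fun h i => ?_⟩
  rcases le_or_gt i Q.natDegree with hi | hi
  · exact h i hi
  · simp [coeff_eq_zero_of_natDegree_lt hi]

lemma div_mod_unique {Q S q r : K[X]} (hQ : Q ≠ 0) (hS : S = Q * q + r)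
    (hr : r.degree < Q.degree) : S / Q = q ∧ S % Q = r := by
  have hmod : S % Q = r := by
    rw [mod_eq_of_dvd_sub (p₂ := r) ⟨q, by rw [hS]; ring⟩, (mod_eq_self_iff hQ).mpr hr]
  refine ⟨mul_left_cancel₀ hQ ?_, hmod⟩
  have := EuclideanDomain.div_add_mod S Q
  rw [hmod] at this
  linear_combination this + hS

section Division

variable {Q : K[X]} {a b : ℝ}

/-- Each long-division step subtracts `C k * X ^ e * Q`, and `val k` is controlled because `Q`
touches its line at the leading coefficient. -/
lemma AboveLine.exists_eq_mul_add (hQ : AboveLine v Q a b)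
    (hlead : valE v Q.leadingCoeff ≤ ((a * Q.natDegree + b : ℝ) : EReal)) {e : ℝ} :
    ∀ S : K[X], AboveLine v S a e → ∃ q r, S = Q * q + r ∧ r.degree < Q.degree ∧
      AboveLine v q a (e - b) ∧ AboveLine v r a e := by
  have hQ0 : Q ≠ 0 := by rintro rfl; simp at hlead
  intro S
  induction S using degree_lt_wf.induction with
  | _ S ih =>
  intro hS
  by_cases hlt : S.degree < Q.degree
  · exact ⟨0, S, by ring, hlt, AboveLine.zero, hS⟩
  push Not at hlt
  have hS0 : S ≠ 0 := by rintro rfl; exact absurd hlt (by simpa using hQ0)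
  have hmn : Q.natDegree ≤ S.natDegree := natDegree_le_natDegree hlt
  set k := S.leadingCoeff / Q.leadingCoeff
  set t := C k * X ^ (S.natDegree - Q.natDegree)
  have hk : k * Q.leadingCoeff = S.leadingCoeff :=
    div_mul_cancel₀ _ (leadingCoeff_ne_zero.mpr hQ0)
  have ht : AboveLine v t a (e - b) := by
    refine AboveLine.C_mul_X_pow <|
      (EReal.addLECancellable_coe (a * Q.natDegree + b)).add_le_add_iff_right.mp ?_
    calc ((a * ↑(S.natDegree - Q.natDegree) + (e - b) : ℝ) : EReal) + ↑(a * Q.natDegree + b)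
        = ((a * S.natDegree + e : ℝ) : EReal) := by
          rw [← EReal.coe_add, EReal.coe_eq_coe_iff]; push_cast [hmn]; ring
      _ ≤ valE v S.leadingCoeff := hS S.natDegree
      _ = valE v k + valE v Q.leadingCoeff := by rw [← valE_mul, hk]
      _ ≤ valE v k + ↑(a * Q.natDegree + b) := add_le_add_right hlead _
  have hdeg : (S - Q * t).degree < S.degree := by
    have hk0 : k ≠ 0 := by
      rintro h; rw [h, zero_mul] at hk; exact leadingCoeff_ne_zero.mpr hS0 hk.symm
    refine degree_sub_lt_left ?_ hS0 ?_
    · rw [degree_mul, degree_C_mul_X_pow _ hk0, degree_eq_natDegree hQ0,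
        degree_eq_natDegree hS0]
      norm_cast; omega
    · rw [leadingCoeff_mul, leadingCoeff_C_mul_X_pow, mul_comm, hk]
  obtain ⟨q, r, hqr, hr, hq, hr'⟩ := ih _ hdeg (hS.sub ((hQ.mul ht).mono (by linarith)))
  exact ⟨q + t, r, by linear_combination hqr, hr, hq.add ht, hr'⟩

lemma AboveLine.mod (hQ : AboveLine v Q a b)
    (hlead : valE v Q.leadingCoeff ≤ ((a * Q.natDegree + b : ℝ) : EReal)) {S : K[X]} {e : ℝ}
    (hS : AboveLine v S a e) : AboveLine v (S % Q) a e := by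
  obtain ⟨q, r, hqr, hr, -, hr'⟩ := hQ.exists_eq_mul_add hlead S hS
  rwa [(div_mod_unique (by rintro rfl; simp at hlead) hqr hr).2]

lemma AboveLine.div (hQ : AboveLine v Q a b)
    (hlead : valE v Q.leadingCoeff ≤ ((a * Q.natDegree + b : ℝ) : EReal)) {S : K[X]} {e : ℝ}
    (hS : AboveLine v S a e) : AboveLine v (S / Q) a (e - b) := by
  obtain ⟨q, r, hqr, hr, hq, -⟩ := hQ.exists_eq_mul_add hlead S hS
  rwa [(div_mod_unique (by rintro rfl; simp at hlead) hqr hr).1]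

end Division

lemma ereal_coe_le_of_forall_sub_mul_le {r C : ℝ} {y : EReal} (hC : 0 ≤ C)
    (h : ∀ ε > 0, ((r - ε * C : ℝ) : EReal) ≤ y) : (r : EReal) ≤ y := by
  by_contra! hlt
  obtain ⟨s, hys, hsr⟩ := EReal.exists_between_coe_real hlt
  have hsr : s < r := EReal.coe_lt_coe_iff.mp hsr
  have hε : 0 < (r - s) / (C + 1) := div_pos (by linarith) (by linarith)
  have hlt := EReal.coe_lt_coe_iff.mp ((h _ hε).trans_lt hys)
  have : (r - s) / (C + 1) * C < r - s := by
    rw [div_mul_eq_mul_div, div_lt_iff₀ (by linarith)]; nlinarith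
  linarith

section NewtonFunction

variable {P : K[X]}

lemma AboveLine.le_NF {a b : ℝ} (h : AboveLine v P a b) (x : ℝ) :
    ((a * x + b : ℝ) : EReal) ≤ NF v P x :=
  le_sSup ⟨a, b, fun i _ => h i, rfl⟩

lemma NF_le {x : ℝ} {y : EReal}
    (h : ∀ a b, AboveLine v P a b → ((a * x + b : ℝ) : EReal) ≤ y) : NF v P x ≤ y :=
  sSup_le <| by
    rintro _ ⟨a, b, hab, rfl⟩
    exact h a b (aboveLine_iff_le_natDegree.mpr hab)

lemma NF_le_valE {t : ℕ} (ht : t ≤ P.natDegree) : NF v P t ≤ valE v (P.coeff t) :=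
  sSup_le <| by
    rintro _ ⟨a, b, hab, rfl⟩
    exact hab t ht

lemma exists_aboveLine_gt {x r ε : ℝ} (hr : (r : EReal) ≤ NF v P x) (hε : 0 < ε) :
    ∃ a b, AboveLine v P a b ∧ r - ε < a * x + b := by
  have : ((r - ε : ℝ) : EReal) < NF v P x :=
    lt_of_lt_of_le (EReal.coe_lt_coe_iff.mpr (by linarith)) hr
  obtain ⟨_, ⟨a, b, hab, rfl⟩, hlt⟩ := lt_sSup_iff.mp this
  exact ⟨a, b, aboveLine_iff_le_natDegree.mpr hab, EReal.coe_lt_coe_iff.mp hlt⟩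

/-- Convexity of the Newton function: its chord over `[m, m + 1]` stays below it outside that
interval. -/
lemma aboveLine_of_NF_eq {m : ℤ} {u w : ℝ} (hm : NF v P m = u) (hm1 : NF v P (m + 1) = w) :
    AboveLine v P (w - u) (u - (w - u) * m) := by
  rw [aboveLine_iff_le_natDegree]
  intro i hi
  refine le_trans ?_ (NF_le_valE hi)
  rcases le_or_gt ((m : ℝ) + 1) i with hmi | him
  · refine ereal_coe_le_of_forall_sub_mul_le (C := i - m) (by linarith) fun ε hε => ?_
    obtain ⟨a, b, hab, hgt⟩ := exists_aboveLine_gt hm1.ge hε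
    have hle : a * m + b ≤ u := EReal.coe_le_coe_iff.mp (hm ▸ hab.le_NF m)
    refine le_trans (EReal.coe_le_coe_iff.mpr ?_) (hab.le_NF i)
    nlinarith [mul_nonneg (show 0 ≤ a - (w - u - ε) by nlinarith)
      (show (0 : ℝ) ≤ i - m - 1 by linarith)]
  · have hi : (i : ℝ) ≤ m := by
      have : (i : ℤ) < m + 1 := by exact_mod_cast him
      exact_mod_cast (show (i : ℤ) ≤ m by omega)
    refine ereal_coe_le_of_forall_sub_mul_le (C := 1 + m - i) (by linarith) fun ε hε => ?_
    obtain ⟨a, b, hab, hgt⟩ := exists_aboveLine_gt hm.ge hε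
    have hle : a * (m + 1) + b ≤ w := EReal.coe_le_coe_iff.mp (hm1 ▸ hab.le_NF (m + 1))
    refine le_trans (EReal.coe_le_coe_iff.mpr ?_) (hab.le_NF i)
    nlinarith [mul_nonneg (show 0 ≤ (w - u + ε) - a by nlinarith)
      (show (0 : ℝ) ≤ m - i by linarith)]

/-- If `val a_d > c`, a line of intermediate slope through a point slightly above `(d, c)` would
still lie below `P`, contradicting `NF P d = c`. -/
lemma valE_coeff_eq_of_kink {d : ℕ} {c μ₀ μ₁ : ℝ} (hμ : μ₀ < μ₁) (hd : d ≤ P.natDegree)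
    (hc : NF v P d = c) (h₀ : AboveLine v P μ₀ (c - μ₀ * d))
    (h₁ : AboveLine v P μ₁ (c - μ₁ * d)) : valE v (P.coeff d) = c := by
  refine le_antisymm ?_ (hc ▸ NF_le_valE hd)
  by_contra! hlt
  obtain ⟨y, hcy, hy⟩ := EReal.exists_between_coe_real hlt
  have hcy : c < y := EReal.coe_lt_coe_iff.mp hcy
  set δ := min ((μ₁ - μ₀) / 2) (y - c)
  have hδ : 0 < δ := lt_min (by linarith) (by linarith)
  have hδ₁ : δ ≤ (μ₁ - μ₀) / 2 := min_le_left _ _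
  have hline : AboveLine v P ((μ₀ + μ₁) / 2) (c + δ - (μ₀ + μ₁) / 2 * d) := by
    intro t
    rcases lt_trichotomy t d with htd | rfl | hdt
    · refine le_trans (EReal.coe_le_coe_iff.mpr ?_) (h₀ t)
      have : (t : ℝ) + 1 ≤ d := by exact_mod_cast htd
      nlinarith
    · refine le_trans (EReal.coe_le_coe_iff.mpr ?_) hy.le
      linarith [min_le_right ((μ₁ - μ₀) / 2) (y - c)]
    · refine le_trans (EReal.coe_le_coe_iff.mpr ?_) (h₁ t)
      have : (d : ℝ) + 1 ≤ t := by exact_mod_cast hdt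
      nlinarith
  have := EReal.coe_le_coe_iff.mp (hc ▸ hline.le_NF d)
  linarith

/-- On `(-∞, d]`, a line of slope `> μ` below `Q` lies below the line of slope `μ` through
`(d, c)`. -/
lemma NF_le_NF_of_aboveLine_imp {Q R : K[X]} {d : ℕ} {c μ x : ℝ} (hx : x ≤ d)
    (hQd : valE v (Q.coeff d) ≤ c) (hR : AboveLine v R μ (c - μ * d))
    (himp : ∀ a b, a ≤ μ → AboveLine v Q a b → AboveLine v R a b) : NF v Q x ≤ NF v R x := by
  refine NF_le fun a b hab => ?_
  rcases le_or_gt a μ with ha | ha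
  · exact (himp a b ha hab).le_NF x
  · refine le_trans (EReal.coe_le_coe_iff.mpr ?_) (hR.le_NF x)
    have : a * d + b ≤ c := EReal.coe_le_coe_iff.mp ((hab d).trans hQd)
    nlinarith

end NewtonFunction

section Factors

open Finset.HasAntidiagonal

variable {A B : K[X]}

lemma coeff_mul_eq_add_sum_erase (p q : ℕ) :
    (A * B).coeff (p + q) = A.coeff p * B.coeff q +
      ∑ x ∈ (antidiagonal (p + q)).erase (p, q), A.coeff x.1 * B.coeff x.2 := by
  rw [coeff_mul, ← Finset.add_sum_erase _ _
    (mem_antidiagonal.mpr rfl : (p, q) ∈ antidiagonal (p + q))]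

lemma le_valE_coeff_mul {p q : ℕ} {r : EReal} (hAB : r ≤ valE v ((A * B).coeff (p + q)))
    (hrest : ∀ i k, i + k = p + q → (i, k) ≠ (p, q) → r ≤ valE v (A.coeff i * B.coeff k)) :
    r ≤ valE v (A.coeff p * B.coeff q) := by
  rw [coeff_mul_eq_add_sum_erase] at hAB
  rw [← add_sub_cancel_right (A.coeff p * B.coeff q)
    (∑ x ∈ (antidiagonal (p + q)).erase (p, q), A.coeff x.1 * B.coeff x.2)]
  refine le_valE_sub hAB (le_valE_sum fun x hx => ?_)
  obtain ⟨hne, hmem⟩ := Finset.mem_erase.mp hx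
  exact hrest x.1 x.2 (mem_antidiagonal.mp hmem) hne

lemma valE_coeff_mul_le {p q : ℕ} {r : ℝ} (hAB : valE v ((A * B).coeff (p + q)) ≤ r)
    (hrest : ∀ i k, i + k = p + q → (i, k) ≠ (p, q) →
      (r : EReal) < valE v (A.coeff i * B.coeff k)) :
    valE v (A.coeff p * B.coeff q) ≤ r := by
  by_contra! hlt
  rw [coeff_mul_eq_add_sum_erase] at hAB
  refine hAB.not_gt (lt_valE_add hlt (lt_valE_sum (EReal.coe_ne_top r) fun x hx => ?_))
  obtain ⟨hne, hmem⟩ := Finset.mem_erase.mp hx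
  exact hrest x.1 x.2 (mem_antidiagonal.mp hmem) hne

variable {d : ℕ} {c μ₀ μ₁ : ℝ}

/-- Downward induction on `k`: in `a_d b_k = (A B)_{d+k} - ∑ a_i b_j`, the terms with `i < d`
have `j > k`. -/
lemma AboveLine.of_mul_left (hμ : μ₀ ≤ μ₁) (hA : AboveLine v A μ₀ (c - μ₀ * d))
    (hAdeg : A.natDegree = d) (hAd : valE v (A.coeff d) = c)
    (hAB : AboveLine v (A * B) μ₁ (c - μ₁ * d)) : AboveLine v B μ₁ 0 := by
  suffices h : ∀ m k, B.natDegree < k + m → ((μ₁ * k + 0 : ℝ) : EReal) ≤ valE v (B.coeff k) from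
    fun k => h (B.natDegree + 1) k (by omega)
  intro m
  induction m with
  | zero => intro k hk; simp [coeff_eq_zero_of_natDegree_lt (by omega : B.natDegree < k)]
  | succ m ih =>
    intro k hk
    have key : ((c + μ₁ * k : ℝ) : EReal) ≤ valE v (A.coeff d * B.coeff k) := by
      refine le_valE_coeff_mul (le_trans (EReal.coe_le_coe_iff.mpr (by push_cast; linarith))
        (hAB (d + k))) fun i j hij hne => ?_
      rcases lt_trichotomy i d with hid | rfl | hdi
      · by_cases hj : B.natDegree < j + m
        · refine coe_le_valE_mul (hA i) (ih j hj) ?_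
          have hj : (j : ℝ) = d + k - i := by
            have : (i : ℝ) + j = d + k := by exact_mod_cast hij
            linarith
          have hi : (i : ℝ) ≤ d := by exact_mod_cast hid.le
          rw [hj]
          nlinarith [mul_nonneg (sub_nonneg.mpr hμ) (sub_nonneg.mpr hi)]
        · simp [coeff_eq_zero_of_natDegree_lt (by omega : B.natDegree < j)]
      · exact absurd (by simpa using hij) hne
      · simp [coeff_eq_zero_of_natDegree_lt (by omega : A.natDegree < i)]
    rw [valE_mul, hAd, EReal.coe_add] at key
    simpa using (EReal.addLECancellable_coe c).add_le_add_iff_left.mp key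

lemma valE_coeff_zero_le_of_mul (hμ : μ₀ < μ₁) (hA : AboveLine v A μ₀ (c - μ₀ * d))
    (hAd : valE v (A.coeff d) = c) (hB : AboveLine v B μ₁ 0)
    (hABd : valE v ((A * B).coeff d) ≤ c) : valE v (B.coeff 0) ≤ 0 := by
  have key : valE v (A.coeff d * B.coeff 0) ≤ c :=
    valE_coeff_mul_le hABd fun i k hik hne => by
      have hk : 1 ≤ k := by
        by_contra! hk
        exact hne (by simp_all)
      refine lt_of_lt_of_le (EReal.coe_lt_coe_iff.mpr ?_)
        (coe_le_valE_mul (hA i) (hB k) le_rfl)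
      have hi : (i : ℝ) = d - k := by
        have : (i : ℝ) + k = d := by exact_mod_cast hik
        linarith
      have : (1 : ℝ) ≤ k := by exact_mod_cast hk
      rw [hi]
      nlinarith [mul_pos (sub_pos.mpr hμ) (show (0 : ℝ) < k by linarith)]
  rw [valE_mul, hAd] at key
  exact (EReal.addLECancellable_coe c).add_le_add_iff_left.mp (by simpa using key)

/-- Upward induction on `j`: `a_j b_0 = (A B)_j - ∑_{i < j} a_i b_{j-i}` and `val b_0 ≤ 0`. -/
lemma AboveLine.of_mul_right {a b : ℝ} (hAB : AboveLine v (A * B) a b)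
    (hB : AboveLine v B a 0) (hB0 : valE v (B.coeff 0) ≤ 0) : AboveLine v A a b := by
  intro j
  induction j using Nat.strong_induction_on with
  | _ j ih =>
  have key : ((a * j + b : ℝ) : EReal) ≤ valE v (A.coeff j * B.coeff 0) :=
    le_valE_coeff_mul (hAB (j + 0)) fun i k hik hne => by
      have hij : i < j := by
        by_contra! h
        exact hne (by simp only [Prod.mk.injEq]; omega)
      refine coe_le_valE_mul (ih i hij) (hB k) ?_
      have : (i : ℝ) + k = j := by exact_mod_cast hik
      have : a * i + a * k = a * j := by rw [← this]; ring
      linarith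
  rw [valE_mul] at key
  exact key.trans (by simpa using add_le_add_right hB0 (valE v (A.coeff j)))

theorem NF_eq_of_mul (hμ : μ₀ < μ₁) (hAdeg : A.natDegree = d) (hAd : valE v (A.coeff d) = c)
    (hABd : valE v ((A * B).coeff d) = c) (hA : AboveLine v A μ₀ (c - μ₀ * d))
    (h₀ : AboveLine v (A * B) μ₀ (c - μ₀ * d)) (h₁ : AboveLine v (A * B) μ₁ (c - μ₁ * d))
    {x : ℝ} (hx : x ≤ d) : NF v A x = NF v (A * B) x := by
  have hB := AboveLine.of_mul_left hμ.le hA hAdeg hAd h₁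
  have hB0 := valE_coeff_zero_le_of_mul hμ hA hAd hB hABd.le
  have hBa {a : ℝ} (ha : a ≤ μ₀) : AboveLine v B a 0 := hB.slope_mono (ha.trans hμ.le)
  exact le_antisymm
    (NF_le_NF_of_aboveLine_imp hx hAd.le h₀ fun a b ha h => by simpa using h.mul (hBa ha))
    (NF_le_NF_of_aboveLine_imp hx hABd.le hA fun a b ha h => h.of_mul_right (hBa ha) hB0)

end Factors

section Iteration

variable {P A V : K[X]} {d : ℕ} {μ W η : ℝ}

variable (v P d μ W) in
structure AdmissibleDivisor (A : K[X]) : Prop where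
  natDegree_eq : A.natDegree = d
  coeff_eq : A.coeff d = P.coeff d
  aboveLine : AboveLine v A μ W

namespace AdmissibleDivisor

lemma leadingCoeff_le (hA : AdmissibleDivisor v P d μ W A)
    (hPd : valE v (P.coeff d) = ((μ * d + W : ℝ) : EReal)) :
    valE v A.leadingCoeff ≤ ((μ * A.natDegree + W : ℝ) : EReal) := by
  rw [leadingCoeff, hA.natDegree_eq, hA.coeff_eq, hPd]

lemma ne_zero (hA : AdmissibleDivisor v P d μ W A)
    (hPd : valE v (P.coeff d) = ((μ * d + W : ℝ) : EReal)) : A ≠ 0 := by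
  rintro rfl
  exact ne_zero_of_valE_eq hPd (by rw [← hA.coeff_eq, coeff_zero])

lemma mod (hA : AdmissibleDivisor v P d μ W A)
    (hPd : valE v (P.coeff d) = ((μ * d + W : ℝ) : EReal)) {S : K[X]} {e : ℝ}
    (hS : AboveLine v S μ e) : AboveLine v (S % A) μ e :=
  hA.aboveLine.mod (hA.leadingCoeff_le hPd) hS

lemma div (hA : AdmissibleDivisor v P d μ W A)
    (hPd : valE v (P.coeff d) = ((μ * d + W : ℝ) : EReal)) {S : K[X]} {e : ℝ}
    (hS : AboveLine v S μ e) : AboveLine v (S / A) μ (e - W) :=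
  hA.aboveLine.div (hA.leadingCoeff_le hPd) hS

lemma add (hA : AdmissibleDivisor v P d μ W A)
    (hPd : valE v (P.coeff d) = ((μ * d + W : ℝ) : EReal)) {H : K[X]}
    (hH : AboveLine v H μ W) (hdeg : H.degree < A.degree) :
    AdmissibleDivisor v P d μ W (A + H) where
  natDegree_eq := (natDegree_add_eq_left_of_degree_lt hdeg).trans hA.natDegree_eq
  coeff_eq := by
    rw [degree_eq_natDegree (hA.ne_zero hPd), hA.natDegree_eq] at hdeg
    rw [coeff_add, coeff_eq_zero_of_degree_lt hdeg, add_zero, hA.coeff_eq]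
  aboveLine := hA.aboveLine.add hH

lemma quotient (hA : AdmissibleDivisor v P d μ W A) (hP : AboveLine v P μ W)
    (hPd : valE v (P.coeff d) = ((μ * d + W : ℝ) : EReal)) : AboveLine v (P / A) μ 0 :=
  (hA.div hPd hP).mono (by linarith)

end AdmissibleDivisor

lemma mul_mod_eq_mul_mod_mod (V P A : K[X]) : (V * P) % A = (V * (P % A)) % A :=
  mod_eq_of_dvd_sub ⟨V * (P / A), by linear_combination (-V) * EuclideanDomain.div_add_mod P A⟩

variable (v P d μ W) in
/-- `η` measures how nearly `A` divides `P` and how nearly `V` inverts `P / A` modulo `A`;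
a Newton step doubles it. -/
structure NewtonState (η : ℝ) (A V : K[X]) : Prop where
  admissible : AdmissibleDivisor v P d μ W A
  rem : AboveLine v (P % A) μ (W + η)
  invErr : AboveLine v ((1 - V * (P / A)) % A) μ η
  inv : AboveLine v V μ 0

namespace NewtonState

variable {A' : K[X]}

lemma correction (hs : NewtonState v P d μ W η A V)
    (hPd : valE v (P.coeff d) = ((μ * d + W : ℝ) : EReal)) :
    AboveLine v ((V * P) % A) μ (W + η) := by
  rw [mul_mod_eq_mul_mod_mod]
  exact hs.admissible.mod hPd ((hs.inv.mul hs.rem).mono (by linarith))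

lemma invErr_div (hs : NewtonState v P d μ W η A V) (hP : AboveLine v P μ W)
    (hPd : valE v (P.coeff d) = ((μ * d + W : ℝ) : EReal)) :
    AboveLine v ((1 - V * (P / A)) / A) μ (-W) :=
  (hs.admissible.div hPd (AboveLine.one.sub ((hs.inv.mul (hs.admissible.quotient hP hPd)).mono
    (by linarith)))).mono (by linarith)

lemma admissible_succ (hs : NewtonState v P d μ W η A V)
    (hPd : valE v (P.coeff d) = ((μ * d + W : ℝ) : EReal)) (hη : 0 ≤ η) :
    AdmissibleDivisor v P d μ W (A + (V * P) % A) :=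
  hs.admissible.add hPd ((hs.correction hPd).mono (by linarith))
    (degree_mod_lt _ (hs.admissible.ne_zero hPd))

lemma rem_succ (hs : NewtonState v P d μ W η A V) (hP : AboveLine v P μ W)
    (hPd : valE v (P.coeff d) = ((μ * d + W : ℝ) : EReal)) (hA'eq : A' = A + (V * P) % A)
    (hA' : AdmissibleDivisor v P d μ W A') : AboveLine v (P % A') μ (W + 2 * η) := by
  set B := P / A
  set q₁ := V * (P % A) / A
  set q₂ := (1 - V * B) / A
  have hq₁ : AboveLine v q₁ μ η := (hs.admissible.div hPd (hs.inv.mul hs.rem)).mono (by linarith)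
  have e₁ := EuclideanDomain.div_add_mod P A
  have e₂ := EuclideanDomain.div_add_mod (V * (P % A)) A
  have e₃ := EuclideanDomain.div_add_mod (1 - V * B) A
  rw [← mul_mod_eq_mul_mod_mod] at e₂
  -- modulo `A'`, `P` is a combination of products of two defects of margin `η`
  rw [mod_eq_of_dvd_sub (p₂ := P % A * ((1 - V * B) % A) - (V * P) % A * (P % A * q₂ + q₁ * B))
    ⟨B + P % A * q₂ + q₁ * B, by rw [hA'eq]; linear_combination -e₁ - B * e₂ - (P % A) * e₃⟩]
  refine hA'.mod hPd (((hs.rem.mul hs.invErr).sub ((hs.correction hPd).mul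
    (((hs.rem.mul (hs.invErr_div hP hPd)).mono ?_).add
      ((hq₁.mul (hs.admissible.quotient hP hPd)).mono ?_)))).mono ?_) <;> linarith

lemma div_succ_sub (hs : NewtonState v P d μ W η A V) (hP : AboveLine v P μ W)
    (hPd : valE v (P.coeff d) = ((μ * d + W : ℝ) : EReal)) (hη : 0 ≤ η)
    (hA'eq : A' = A + (V * P) % A) (hA' : AdmissibleDivisor v P d μ W A') :
    AboveLine v (P / A' - P / A) μ η := by
  have e₁ := EuclideanDomain.div_add_mod P A
  have e₂ := EuclideanDomain.div_add_mod P A'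
  rw [EuclideanDomain.eq_div_of_mul_eq_right (hA'.ne_zero hPd)
    (show A' * (P / A' - P / A) = P % A - P % A' - (V * P) % A * (P / A) by
      rw [hA'eq] at e₂ ⊢; linear_combination e₂ - e₁)]
  have hnum : AboveLine v (P % A - P % A' - (V * P) % A * (P / A)) μ (W + η) :=
    (hs.rem.sub ((hs.rem_succ hP hPd hA'eq hA').mono (by linarith))).sub
      (((hs.correction hPd).mul (hs.admissible.quotient hP hPd)).mono (by linarith))
  exact (hA'.div hPd hnum).mono (by linarith)

lemma invErr_succ (hs : NewtonState v P d μ W η A V) (hP : AboveLine v P μ W)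
    (hPd : valE v (P.coeff d) = ((μ * d + W : ℝ) : EReal)) (hη : 0 ≤ η)
    (hA'eq : A' = A + (V * P) % A) (hA' : AdmissibleDivisor v P d μ W A') :
    AboveLine v ((1 - (2 * V - V ^ 2 * (P / A')) % A' * (P / A')) % A') μ (2 * η) := by
  set B' := P / A'
  set q₂ := (1 - V * (P / A)) / A
  set u := (1 - V * (P / A)) % A - (V * P) % A * q₂ - V * (B' - P / A)
  have hu : AboveLine v u μ η :=
    (hs.invErr.sub (((hs.correction hPd).mul (hs.invErr_div hP hPd)).mono (by linarith))).sub
      ((hs.inv.mul (hs.div_succ_sub hP hPd hη hA'eq hA')).mono (by linarith))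
  have e₃ := EuclideanDomain.div_add_mod (1 - V * (P / A)) A
  have e₄ := EuclideanDomain.div_add_mod (2 * V - V ^ 2 * B') A'
  -- `1 - V' B' ≡ (1 - V B')² ≡ u² (mod A')`: the error of the inverse is squared
  rw [mod_eq_of_dvd_sub (p₂ := u * u)
    ⟨(2 * V - V ^ 2 * B') / A' * B' + 2 * u * q₂ + A' * q₂ ^ 2, by
      linear_combination (-B') * e₄ - ((1 - V * B') + (u + A' * q₂)) * q₂ * hA'eq -
        ((1 - V * B') + (u + A' * q₂)) * e₃⟩]
  exact hA'.mod hPd ((hu.mul hu).mono (by linarith))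

theorem succ (hs : NewtonState v P d μ W η A V) (hP : AboveLine v P μ W)
    (hPd : valE v (P.coeff d) = ((μ * d + W : ℝ) : EReal)) (hη : 0 ≤ η) :
    NewtonState v P d μ W (2 * η) (A + (V * P) % A)
      ((2 * V - V ^ 2 * (P / (A + (V * P) % A))) % (A + (V * P) % A)) := by
  set A' := A + (V * P) % A with hA'eq
  have hA' : AdmissibleDivisor v P d μ W A' := hs.admissible_succ hPd hη
  refine ⟨hA', hs.rem_succ hP hPd hA'eq hA', hs.invErr_succ hP hPd hη hA'eq hA', ?_⟩
  refine hA'.mod hPd ?_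
  rw [two_mul, sq]
  exact (hs.inv.add hs.inv).sub
    (((hs.inv.mul hs.inv).mul (hA'.quotient hP hPd)).mono (by linarith))

end NewtonState

end Iteration

lemma coeff_sum_range_C_mul_X_pow (f : ℕ → K) (n j : ℕ) :
    (∑ i ∈ Finset.range n, C (f i) * X ^ i).coeff j = if j < n then f j else 0 := by
  simp

lemma NewtonState.init {P : K[X]} {d : ℕ} {μ W η : ℝ} (hP : AboveLine v P μ W)
    (hPd : valE v (P.coeff d) = ((μ * d + W : ℝ) : EReal))
    (hP' : AboveLine v P (μ + η) (W - η * d)) (hη : 0 ≤ η) :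
    NewtonState v P d μ W η (∑ i ∈ Finset.range (d + 1), C (P.coeff i) * X ^ i) 1 := by
  set A₀ := ∑ i ∈ Finset.range (d + 1), C (P.coeff i) * X ^ i
  have hcoeff (j : ℕ) : A₀.coeff j = if j ≤ d then P.coeff j else 0 := by
    simp [A₀]
  have hPd0 : P.coeff d ≠ 0 := ne_zero_of_valE_eq hPd
  have hA₀ : AdmissibleDivisor v P d μ W A₀ :=
    { natDegree_eq := natDegree_eq_of_le_of_coeff_ne_zero
        (natDegree_le_iff_coeff_eq_zero.mpr fun j hj => by
          rw [hcoeff, if_neg (by exact_mod_cast hj.not_ge)])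
        (by rwa [hcoeff, if_pos le_rfl])
      coeff_eq := by rw [hcoeff, if_pos le_rfl]
      aboveLine := fun j => by
        rw [hcoeff]
        split_ifs
        exacts [hP j, by simp] }
  have hhigh : AboveLine v (P - A₀) μ (W + η) := fun j => by
    rw [coeff_sub, hcoeff]
    split_ifs with hj
    · simp
    · rw [sub_zero]
      refine le_trans (EReal.coe_le_coe_iff.mpr ?_) (hP' j)
      have : (d : ℝ) + 1 ≤ j := by exact_mod_cast Nat.succ_le_of_lt (not_le.mp hj)
      nlinarith
  have hrem : AboveLine v (P % A₀) μ (W + η) := by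
    rw [mod_eq_of_dvd_sub (p₂ := P - A₀) ⟨1, by ring⟩]
    exact hA₀.mod hPd hhigh
  refine ⟨hA₀, hrem, ?_, AboveLine.one⟩
  have e := EuclideanDomain.div_add_mod P A₀
  rw [one_mul, EuclideanDomain.eq_div_of_mul_eq_right (hA₀.ne_zero hPd)
    (show A₀ * (1 - P / A₀) = P % A₀ - (P - A₀) by linear_combination -e)]
  exact hA₀.mod hPd ((hA₀.div hPd (hrem.sub hhigh)).mono (by linarith))

theorem NewtonState.iterate {P : K[X]} {d : ℕ} {μ W Δ : ℝ} (hP : AboveLine v P μ W)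
    (hPd : valE v (P.coeff d) = ((μ * d + W : ℝ) : EReal))
    (hP' : AboveLine v P (μ + Δ) (W - Δ * d)) (hΔ : 0 ≤ Δ) {A V : ℕ → K[X]}
    (hA0 : A 0 = ∑ i ∈ Finset.range (d + 1), C (P.coeff i) * X ^ i) (hV0 : V 0 = 1)
    (hArec : ∀ i, A (i + 1) = A i + (V i * P) % A i)
    (hVrec : ∀ i, V (i + 1) = (2 * V i - (V i) ^ 2 * (P / A (i + 1))) % A (i + 1)) (i : ℕ) :
    NewtonState v P d μ W (Δ * 2 ^ i) (A i) (V i) := by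
  induction i with
  | zero =>
    rw [hA0, hV0, pow_zero, mul_one]
    exact NewtonState.init hP hPd hP' hΔ
  | succ i ih =>
    rw [hVrec, hArec, pow_succ, mul_comm _ 2, ← mul_assoc, mul_comm Δ 2, mul_assoc]
    exact ih.succ hP hPd (by positivity)

section Limits

variable (v) in
def ValCauchy (u : ℕ → K) : Prop :=
  ∀ M : ℤ, ∃ N : ℕ, ∀ p ≥ N, ∀ q ≥ N, (M : WithTop ℤ) ≤ v (u p - u q)

variable (v) in
def ValTendsto (u : ℕ → K) (l : K) : Prop :=
  ∀ M : ℤ, ∃ N : ℕ, ∀ p ≥ N, (M : WithTop ℤ) ≤ v (u p - l)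

lemma eq_zero_of_forall_le {x : K} (h : ∀ M : ℤ, (M : WithTop ℤ) ≤ v x) : x = 0 := by
  by_contra hx
  obtain ⟨n, hn⟩ := WithTop.ne_top_iff_exists.mp (v.ne_top_iff.mpr hx)
  have := h (n + 1)
  rw [← hn, WithTop.coe_le_coe] at this
  omega

lemma le_valE_sub_of_tendsto {u : ℕ → K} {l x : K} {r : ℝ} (hu : ValTendsto v u l)
    (h : ∃ N, ∀ p ≥ N, (r : EReal) ≤ valE v (x - u p)) : (r : EReal) ≤ valE v (x - l) := by
  obtain ⟨N₁, h₁⟩ := h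
  obtain ⟨N₂, h₂⟩ := hu ⌈r⌉
  rw [← sub_add_sub_cancel x (u (max N₁ N₂)) l]
  exact le_valE_add (h₁ _ (le_max_left _ _)) ((EReal.coe_le_coe_iff.mpr (Int.le_ceil r)).trans
    (coe_le_valE.mpr (h₂ _ (le_max_right _ _))))

variable {μ : ℝ} {g : ℕ → ℝ}

lemma AboveLine.eventually_le_coeff {Q : ℕ → K[X]} (hg : ∀ M : ℝ, ∃ N, ∀ q ≥ N, M ≤ g q)
    (h : ∀ q, AboveLine v (Q q) μ (g q)) (j : ℕ) (M : ℤ) :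
    ∃ N, ∀ q ≥ N, (M : WithTop ℤ) ≤ v ((Q q).coeff j) := by
  obtain ⟨N, hN⟩ := hg (M - μ * j)
  exact ⟨N, fun q hq => (h q).le_coeff (by linarith [hN q hq])⟩

lemma eq_zero_of_forall_aboveLine {Q : K[X]} (hg : ∀ M : ℝ, ∃ N, ∀ q ≥ N, M ≤ g q)
    (h : ∀ q, AboveLine v Q μ (g q)) : Q = 0 := by
  ext j
  refine eq_zero_of_forall_le (v := v) fun M => ?_
  obtain ⟨N, hN⟩ := AboveLine.eventually_le_coeff (Q := fun _ => Q) hg h j M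
  exact hN N le_rfl

lemma AboveLine.sub_of_succ {A : ℕ → K[X]} (hg : Monotone g)
    (h : ∀ i, AboveLine v (A (i + 1) - A i) μ (g i)) {q p : ℕ} (hqp : q ≤ p) :
    AboveLine v (A p - A q) μ (g q) := by
  induction p, hqp using Nat.le_induction with
  | base => simpa using AboveLine.zero
  | succ p hqp ih => simpa using ((h p).mono (hg hqp)).add ih

lemma exists_limit (hcomplete : ∀ u : ℕ → K, ValCauchy v u → ∃ l, ValTendsto v u l)
    {A : ℕ → K[X]} {d : ℕ} (hg : ∀ M : ℝ, ∃ N, ∀ q ≥ N, M ≤ g q)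
    (hA : ∀ q p, q ≤ p → AboveLine v (A p - A q) μ (g q)) (hdeg : ∀ i, (A i).natDegree ≤ d) :
    ∃ L : K[X], L.natDegree ≤ d ∧ ∀ q, AboveLine v (A q - L) μ (g q) := by
  have hcauchy (j : ℕ) : ValCauchy v fun i => (A i).coeff j := by
    intro M
    obtain ⟨N, hN⟩ := hg (M - μ * j)
    refine ⟨N, fun p hp q hq => ?_⟩
    rcases le_total q p with hqp | hpq
    · simpa using (hA q p hqp).le_coeff (j := j) (by linarith [hN q hq])
    · rw [v.map_sub_swap]
      simpa using (hA p q hpq).le_coeff (j := j) (by linarith [hN p hp])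
  choose l hl using fun j => hcomplete _ (hcauchy j)
  refine ⟨∑ j ∈ Finset.range (d + 1), C (l j) * X ^ j,
    natDegree_le_iff_coeff_eq_zero.mpr fun j hj => ?_, fun q j => ?_⟩
  · rw [coeff_sum_range_C_mul_X_pow, if_neg (by omega)]
  · rw [coeff_sub, coeff_sum_range_C_mul_X_pow]
    split_ifs with hj
    · exact le_valE_sub_of_tendsto (hl j) ⟨q, fun p hqp => by simpa using (hA q p hqp).neg j⟩
    · rw [coeff_eq_zero_of_natDegree_lt (by have := hdeg q; omega), sub_zero, valE_zero]
      exact le_top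

end Limits

theorem NewtonState.exists_dvd_limit
    (hcomplete : ∀ u : ℕ → K, ValCauchy v u → ∃ l, ValTendsto v u l) {P : K[X]} {d : ℕ}
    {μ W Δ : ℝ} (hP : AboveLine v P μ W) (hPd : valE v (P.coeff d) = ((μ * d + W : ℝ) : EReal))
    (hΔ : 0 < Δ) {A V : ℕ → K[X]} (hs : ∀ i, NewtonState v P d μ W (Δ * 2 ^ i) (A i) (V i))
    (hArec : ∀ i, A (i + 1) = A i + (V i * P) % A i) :
    ∃ L, L ∣ P ∧ AdmissibleDivisor v P d μ W L ∧
      ∀ j (M : ℤ), ∃ N, ∀ i ≥ N, (M : WithTop ℤ) ≤ v ((A i - L).coeff j) := by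
  set g : ℕ → ℝ := fun i => W + Δ * 2 ^ i
  have hg (M : ℝ) : ∃ N, ∀ q ≥ N, M ≤ g q := by
    obtain ⟨N, hN⟩ := exists_nat_gt ((M - W) / Δ)
    refine ⟨N, fun q hq => ?_⟩
    have : (N : ℝ) ≤ 2 ^ q := by exact_mod_cast hq.trans Nat.lt_two_pow_self.le
    have := (div_lt_iff₀ hΔ).mp hN
    simp only [g]
    nlinarith
  have hgmono : Monotone g := fun i j hij => by
    simp only [g]
    gcongr
    norm_num
  have hstep (i : ℕ) : AboveLine v (A (i + 1) - A i) μ (g i) := by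
    rw [hArec, add_sub_cancel_left]
    exact (hs i).correction hPd
  obtain ⟨L, hLdeg, hL⟩ := exists_limit hcomplete hg
    (fun q p hqp => AboveLine.sub_of_succ hgmono hstep hqp)
    fun i => (hs i).admissible.natDegree_eq.le
  have hLd : L.coeff d = P.coeff d := by
    refine (sub_eq_zero.mp (eq_zero_of_forall_le (v := v) fun M => ?_)).symm
    obtain ⟨N, hN⟩ := AboveLine.eventually_le_coeff hg hL d M
    simpa [(hs N).admissible.coeff_eq] using hN N le_rfl
  have hL' : AdmissibleDivisor v P d μ W L :=
    { natDegree_eq := natDegree_eq_of_le_of_coeff_ne_zero hLdeg (hLd ▸ ne_zero_of_valE_eq hPd)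
      coeff_eq := hLd
      aboveLine := by
        simpa using (hs 0).admissible.aboveLine.sub ((hL 0).mono (by simp [g]; linarith)) }
  -- modulo `L`, `P ≡ (A q - L) * (P / A q) + P % A q`, whose margin grows with `q`
  have hmod : P % L = 0 := eq_zero_of_forall_aboveLine hg fun q => by
    have e := EuclideanDomain.div_add_mod P (A q)
    rw [mod_eq_of_dvd_sub (p₂ := (A q - L) * (P / A q) + P % A q) ⟨P / A q, by
      linear_combination -e⟩]
    exact hL'.mod hPd ((((hL q).mul ((hs q).admissible.quotient hP hPd)).mono (by simp [g])).add
      (hs q).rem)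
  exact ⟨L, EuclideanDomain.mod_eq_zero.mp hmod, hL', AboveLine.eventually_le_coeff hg hL⟩

theorem stmt9_general (v : AddValuation K (WithTop ℤ))
    (hcomplete : ∀ u : ℕ → K,
      (∀ M : ℤ, ∃ N : ℕ, ∀ p ≥ N, ∀ q ≥ N, (M : WithTop ℤ) ≤ v (u p - u q)) →
      ∃ l : K, ∀ M : ℤ, ∃ N : ℕ, ∀ p ≥ N, (M : WithTop ℤ) ≤ v (u p - l))
    (P : K[X]) (n d : ℕ) (hn : P.natDegree = n)
    (hdn : d < n)
    (c lam0 lam1 : ℝ) (hlt : lam0 < lam1)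
    (hd : NF v P (d : ℝ) = ((c : ℝ) : EReal))
    (hleft : NF v P ((d : ℝ) - 1) = ((c - lam0 : ℝ) : EReal))
    (hright : NF v P ((d : ℝ) + 1) = ((c + lam1 : ℝ) : EReal))
    (A V : ℕ → K[X])
    (hA0 : A 0 = ∑ i ∈ Finset.range (d + 1), C (P.coeff i) * X ^ i)
    (hV0 : V 0 = 1)
    (hArec : ∀ i, A (i + 1) = A i + (V i * P) % A i)
    (hVrec : ∀ i, V (i + 1) = (2 * V i - (V i) ^ 2 * (P / A (i + 1))) % A (i + 1)) :
    ∃ Ainf : K[X], Ainf ∣ P ∧ Ainf.natDegree = d ∧ Ainf.coeff d = P.coeff d ∧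
      (∀ x ∈ Set.Icc (0 : ℝ) (d : ℝ), NF v Ainf x = NF v P x) ∧
      (∀ j : ℕ, ∀ M : ℤ, ∃ N : ℕ, ∀ i ≥ N, (M : WithTop ℤ) ≤ v ((A i - Ainf).coeff j)) := by
  have hP₀ : AboveLine v P lam0 (c - lam0 * d) := by
    convert aboveLine_of_NF_eq (m := (d : ℤ) - 1) (u := c - lam0) (w := c)
      (by push_cast; exact hleft) (by push_cast; simpa using hd) using 1 <;> push_cast <;> ring
  have hP₁ : AboveLine v P lam1 (c - lam1 * d) := by
    convert aboveLine_of_NF_eq (m := d) (u := c) (w := c + lam1) (by simpa using hd)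
      (by simpa using hright) using 1 <;> push_cast <;> ring
  have hPd : valE v (P.coeff d) = c := valE_coeff_eq_of_kink hlt (hn ▸ hdn.le) hd hP₀ hP₁
  have hPd' : valE v (P.coeff d) = ((lam0 * d + (c - lam0 * d) : ℝ) : EReal) := by
    rw [hPd, add_sub_cancel]
  have hs := NewtonState.iterate hP₀ hPd' (by convert hP₁ using 1 <;> ring)
    (sub_nonneg.mpr hlt.le) hA0 hV0 hArec hVrec
  obtain ⟨L, ⟨B, rfl⟩, hL, hconv⟩ :=
    NewtonState.exists_dvd_limit hcomplete hP₀ hPd' (sub_pos.mpr hlt) hs hArec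
  exact ⟨L, dvd_mul_right L B, hL.natDegree_eq, hL.coeff_eq, fun x hx =>
    NF_eq_of_mul hlt hL.natDegree_eq (hL.coeff_eq ▸ hPd) hPd hL.aboveLine hP₀ hP₁ hx.2, hconv⟩

/-- the Newton iteration `A₀ = Σ_{i≤d} aᵢXⁱ`, `V₀ = 1`,
`A_{i+1} = A_i + (V_i P mod A_i)`, `V_{i+1} = (2V_i − V_i²(P div A_{i+1})) mod A_{i+1}`
converges coefficientwise to a divisor `A_∞` of `P` of degree `d`, with leading
coefficient `a_d` and Newton function `NF(P)|[0,d]`. -/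
theorem stmt9 (v : AddValuation K (WithTop ℤ))
    (hcomplete : ∀ u : ℕ → K,
      (∀ M : ℤ, ∃ N : ℕ, ∀ p ≥ N, ∀ q ≥ N, (M : WithTop ℤ) ≤ v (u p - u q)) →
      ∃ l : K, ∀ M : ℤ, ∃ N : ℕ, ∀ p ≥ N, (M : WithTop ℤ) ≤ v (u p - l))
    (P : K[X]) (hP : P ≠ 0) (n d : ℕ) (hn : P.natDegree = n)
    (h0d : 0 < d) (hdn : d < n)
    (c lam0 lam1 : ℝ) (hlt : lam0 < lam1)
    (hd : NF v P (d : ℝ) = ((c : ℝ) : EReal))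
    (hleft : NF v P ((d : ℝ) - 1) = ((c - lam0 : ℝ) : EReal))
    (hright : NF v P ((d : ℝ) + 1) = ((c + lam1 : ℝ) : EReal))
    (A V : ℕ → K[X])
    (hA0 : A 0 = ∑ i ∈ Finset.range (d + 1), C (P.coeff i) * X ^ i)
    (hV0 : V 0 = 1)
    (hArec : ∀ i, A (i + 1) = A i + (V i * P) % A i)
    (hVrec : ∀ i, V (i + 1) = (2 * V i - (V i) ^ 2 * (P / A (i + 1))) % A (i + 1)) :
    ∃ Ainf : K[X], Ainf ∣ P ∧ Ainf.natDegree = d ∧ Ainf.coeff d = P.coeff d ∧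
      (∀ x ∈ Set.Icc (0 : ℝ) (d : ℝ), NF v Ainf x = NF v P x) ∧
      (∀ j : ℕ, ∀ M : ℤ, ∃ N : ℕ, ∀ i ≥ N, (M : WithTop ℤ) ≤ v ((A i - Ainf).coeff j)) :=
  stmt9_general v hcomplete P n d hn hdn c lam0 lam1 hlt hd hleft hright A V hA0 hV0 hArec hVrec
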